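/- Let $r_0 > 0$, $s > 0$, $\alpha \in [0,1]$ with $4 s r_0^{\alpha-1} < (3/2)^{1/6} - 1$, and define $r_{i+1} = r_i + 4 s r_i^{\alpha}$. Then for every $i \geq 0$, $r_{i+7} - 10 s r_{i+7}^{\alpha} > r_i + 10 s r_i^{\alpha}$; consequently, any point $x$ lies in at most $6$ of the intervals $(r_i - 10 s r_i^{\alpha},\, r_i + 10 s r_i^{\alpha})$. -/
import Mathlib

open Real

theorem stmt_1 (s α : ℝ) (hs : 0 < s) (hα : α ∈ Set.Icc (0:ℝ) 1)
    (r : ℕ → ℝ) (hr0 : 0 < r 0)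
    (hsmall : 4 * s * (r 0) ^ (α - 1) < ((3:ℝ)/2) ^ ((1:ℝ)/6) - 1)
    (hrec : ∀ i, r (i + 1) = r i + 4 * s * (r i) ^ α) :
    (∀ i, r i + 10 * s * (r i) ^ α < r (i + 7) - 10 * s * (r (i + 7)) ^ α) ∧
    (∀ x : ℝ,
      ({i : ℕ | r i - 10 * s * (r i) ^ α < x ∧ x < r i + 10 * s * (r i) ^ α}).Finite ∧
      ({i : ℕ | r i - 10 * s * (r i) ^ α < x ∧ x < r i + 10 * s * (r i) ^ α}).ncard ≤ 6) := by
  obtain ⟨hα0, hα1⟩ := hα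
  set ε : ℝ := 4 * s * (r 0) ^ (α - 1) with hεdef
  have hε : 0 < ε := by positivity
  have hpos : ∀ i, 0 < r i := by
    intro i
    induction i with
    | zero => exact hr0
    | succ n ih => rw [hrec n]; positivity
  have hmono : Monotone r := by
    apply monotone_nat_of_le_succ
    intro n
    rw [hrec n]
    nlinarith [rpow_pos_of_pos (hpos n) α]
  have hppos : ∀ i, 0 < (r i) ^ α := fun i => rpow_pos_of_pos (hpos i) α
  have hpmono : ∀ i j, i ≤ j → (r i) ^ α ≤ (r j) ^ α := fun i j h =>
    rpow_le_rpow (hpos i).le (hmono h) hα0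
  have hratio : ∀ i, r (i + 1) ≤ (1 + ε) * r i := by
    intro i
    have h1 : (r i) ^ (α - 1) ≤ (r 0) ^ (α - 1) :=
      rpow_le_rpow_of_nonpos hr0 (hmono (Nat.zero_le i)) (by linarith)
    have h2 : (r i) ^ α = (r i) ^ (α - 1) * r i := by
      rw [← Real.rpow_add_one (hpos i).ne']
      ring_nf
    have h3 : (4 * s * r i) * ((r i) ^ (α - 1)) ≤ (4 * s * r i) * ((r 0) ^ (α - 1)) :=
      mul_le_mul_of_nonneg_left h1 (by nlinarith [hpos i])
    rw [hrec i, h2, hεdef]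
    nlinarith [hpos i]
  set q : ℝ := (1 + ε) ^ α with hqdef
  have hq0 : (0:ℝ) < q := rpow_pos_of_pos (by linarith) α
  have hq1 : 1 ≤ q := Real.one_le_rpow (by linarith) hα0
  have hqle : q ≤ 1 + ε := by
    calc q ≤ (1 + ε) ^ (1:ℝ) := rpow_le_rpow_of_exponent_le (by linarith) hα1
    _ = 1 + ε := rpow_one _
  have hc6 : (((3:ℝ)/2) ^ ((1:ℝ)/6)) ^ (6:ℕ) = (3:ℝ)/2 := by
    rw [← Real.rpow_natCast (((3:ℝ)/2) ^ ((1:ℝ)/6)) 6, ← Real.rpow_mul (by norm_num)]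
    norm_num
  have hq6 : q ^ (6:ℕ) ≤ 3/2 := by
    calc q ^ (6:ℕ) ≤ (1 + ε) ^ (6:ℕ) := pow_le_pow_left₀ (by positivity) hqle 6
    _ ≤ (((3:ℝ)/2) ^ ((1:ℝ)/6)) ^ (6:ℕ) :=
        pow_le_pow_left₀ (by linarith) (by linarith) 6
    _ = 3/2 := hc6
  have hq65 : q ≤ 6/5 := by
    by_contra h
    push_neg at h
    have : ((6:ℝ)/5) ^ (6:ℕ) < q ^ (6:ℕ) := pow_lt_pow_left₀ h (by norm_num) (by norm_num)
    norm_num at this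
    linarith
  have hquad : 6 * q^2 ≤ 4 * q + 4 := by
    nlinarith [mul_nonneg (by linarith : (0:ℝ) ≤ 6/5 - q) (by linarith : (0:ℝ) ≤ q - 1)]
  have hstep : ∀ i, (r (i+1)) ^ α ≤ q * (r i) ^ α := by
    intro i
    calc (r (i+1)) ^ α ≤ ((1 + ε) * r i) ^ α :=
          rpow_le_rpow (hpos (i+1)).le (hratio i) hα0
    _ = q * (r i) ^ α := Real.mul_rpow (by linarith) (hpos i).le
  set B : ℕ → ℝ := fun i => r i - 10 * s * (r i) ^ α with hBdef
  set A : ℕ → ℝ := fun i => r i + 10 * s * (r i) ^ α with hAdef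
  have hBstep : ∀ i, B i < B (i + 1) := by
    intro i
    simp only [hBdef]
    have h1 : (10*s) * ((r (i+1)) ^ α) ≤ (10*s) * (q * (r i) ^ α) :=
      mul_le_mul_of_nonneg_left (hstep i) (by positivity)
    have h2 : q * ((10*s) * ((r i) ^ α)) ≤ (6/5) * ((10*s) * ((r i) ^ α)) :=
      mul_le_mul_of_nonneg_right hq65 (by nlinarith [hppos i])
    have h3 := hrec i
    have h4 := hppos i
    nlinarith
  have hBmono : StrictMono B := strictMono_nat_of_lt_succ hBstep
  have key6 : ∀ i, A i ≤ B (i + 6) := by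
    intro i
    have s6 : (r (i+6)) ^ α ≤ q * (r (i+5)) ^ α := hstep (i+5)
    have s5 : (r (i+5)) ^ α ≤ q * (r (i+4)) ^ α := hstep (i+4)
    have h64 : (r (i+6)) ^ α ≤ q^2 * (r (i+4)) ^ α := by
      calc (r (i+6)) ^ α ≤ q * (r (i+5)) ^ α := s6
      _ ≤ q * (q * (r (i+4)) ^ α) := mul_le_mul_of_nonneg_left s5 hq0.le
      _ = q^2 * (r (i+4)) ^ α := by ring
    have h60 : (r (i+6)) ^ α ≤ q^(6:ℕ) * (r i) ^ α := by
      calc (r (i+6)) ^ α ≤ q * (r (i+5)) ^ α := s6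
      _ ≤ q * (q * (r (i+4)) ^ α) := mul_le_mul_of_nonneg_left s5 hq0.le
      _ ≤ q * (q * (q * (r (i+3)) ^ α)) :=
          mul_le_mul_of_nonneg_left (mul_le_mul_of_nonneg_left (hstep (i+3)) hq0.le) hq0.le
      _ ≤ q * (q * (q * (q * (r (i+2)) ^ α))) :=
          mul_le_mul_of_nonneg_left (mul_le_mul_of_nonneg_left
            (mul_le_mul_of_nonneg_left (hstep (i+2)) hq0.le) hq0.le) hq0.le
      _ ≤ q * (q * (q * (q * (q * (r (i+1)) ^ α)))) :=
          mul_le_mul_of_nonneg_left (mul_le_mul_of_nonneg_left (mul_le_mul_of_nonneg_left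
            (mul_le_mul_of_nonneg_left (hstep (i+1)) hq0.le) hq0.le) hq0.le) hq0.le
      _ ≤ q * (q * (q * (q * (q * (q * (r i) ^ α))))) :=
          mul_le_mul_of_nonneg_left (mul_le_mul_of_nonneg_left (mul_le_mul_of_nonneg_left
            (mul_le_mul_of_nonneg_left (mul_le_mul_of_nonneg_left (hstep i) hq0.le)
              hq0.le) hq0.le) hq0.le) hq0.le
      _ = q^(6:ℕ) * (r i) ^ α := by ring
    have hp6p0 : (r (i+6)) ^ α ≤ (3/2) * (r i) ^ α := by
      calc (r (i+6)) ^ α ≤ q^(6:ℕ) * (r i) ^ α := h60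
      _ ≤ (3/2) * (r i) ^ α := mul_le_mul_of_nonneg_right hq6 (hppos i).le
    -- main pure-power inequality
    have H1 : 4 * ((r (i+6)) ^ α) ≤ 4 * (q^2 * (r (i+4)) ^ α) := by linarith
    have H2 : (4*q) * ((r (i+6)) ^ α) ≤ (4*q) * (q * (r (i+5)) ^ α) :=
      mul_le_mul_of_nonneg_left s6 (by positivity)
    have H3 : (4*q^2) * ((r (i+6)) ^ α) ≤ (4*q^2) * ((3/2) * (r i) ^ α) :=
      mul_le_mul_of_nonneg_left hp6p0 (by positivity)
    have H4 : (6 * q^2) * ((r (i+6)) ^ α) ≤ (4 * q + 4) * ((r (i+6)) ^ α) :=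
      mul_le_mul_of_nonneg_right hquad (hppos (i+6)).le
    have main2 : q^2 * (10 * ((r (i+6)) ^ α)) ≤
        q^2 * (6 * ((r i) ^ α) + 4 * ((r (i+4)) ^ α) + 4 * ((r (i+5)) ^ α)) := by
      nlinarith [H1, H2, H3, H4]
    have hmain : 10 * ((r (i+6)) ^ α) ≤
        6 * ((r i) ^ α) + 4 * ((r (i+4)) ^ α) + 4 * ((r (i+5)) ^ α) :=
      le_of_mul_le_mul_left main2 (by positivity)
    have hsum : 10 * ((r i) ^ α) + 10 * ((r (i+6)) ^ α) ≤
        4 * ((r i) ^ α + (r (i+1)) ^ α + (r (i+2)) ^ α + (r (i+3)) ^ α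
          + (r (i+4)) ^ α + (r (i+5)) ^ α) := by
      have p1 := hpmono i (i+1) (by omega)
      have p2 := hpmono i (i+2) (by omega)
      have p3 := hpmono i (i+3) (by omega)
      linarith
    have E1 : r (i+1) = r i + 4*s*(r i)^α := hrec i
    have E2 : r (i+2) = r (i+1) + 4*s*(r (i+1))^α := hrec (i+1)
    have E3 : r (i+3) = r (i+2) + 4*s*(r (i+2))^α := hrec (i+2)
    have E4 : r (i+4) = r (i+3) + 4*s*(r (i+3))^α := hrec (i+3)
    have E5 : r (i+5) = r (i+4) + 4*s*(r (i+4))^α := hrec (i+4)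
    have E6 : r (i+6) = r (i+5) + 4*s*(r (i+5))^α := hrec (i+5)
    simp only [hAdef, hBdef]
    have hfin : s * (10 * ((r i) ^ α) + 10 * ((r (i+6)) ^ α)) ≤
        s * (4 * ((r i) ^ α + (r (i+1)) ^ α + (r (i+2)) ^ α + (r (i+3)) ^ α
          + (r (i+4)) ^ α + (r (i+5)) ^ α)) :=
      mul_le_mul_of_nonneg_left hsum hs.le
    linarith [hfin, E1, E2, E3, E4, E5, E6]
  have key : ∀ i j, i + 6 ≤ j → A i ≤ B j := by
    intro i j h
    calc A i ≤ B (i + 6) := key6 i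
    _ ≤ B j := hBmono.monotone h
  constructor
  · intro i
    calc r i + 10 * s * (r i) ^ α = A i := rfl
    _ ≤ B (i + 6) := key6 i
    _ < B (i + 7) := hBstep (i+6)
    _ = r (i + 7) - 10 * s * (r (i + 7)) ^ α := rfl
  · intro x
    set S := {i : ℕ | r i - 10 * s * (r i) ^ α < x ∧ x < r i + 10 * s * (r i) ^ α} with hS
    have hSab : S = {i : ℕ | B i < x ∧ x < A i} := rfl
    rcases Set.eq_empty_or_nonempty S with h | h
    · rw [h]; exact ⟨Set.finite_empty, by simp⟩
    · have hne : S.Nonempty := h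
      set m := sInf S with hm
      have hmS : m ∈ S := Nat.sInf_mem hne
      have hsub : S ⊆ Set.Icc m (m + 5) := by
        intro j hj
        refine ⟨Nat.sInf_le hj, ?_⟩
        by_contra hc
        push_neg at hc
        have h6 : m + 6 ≤ j := by omega
        have hk := key m j h6
        rw [hSab] at hmS hj
        exact absurd (lt_trans (lt_of_lt_of_le hmS.2 hk) hj.1) (lt_irrefl x)
      have hfin : S.Finite := (Set.finite_Icc m (m+5)).subset hsub
      refine ⟨hfin, ?_⟩
      have hIcc : (Set.Icc m (m+5)).ncard = 6 := by
        simp [Set.ncard_eq_toFinset_card', Set.toFinset_Icc]; omega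
      calc S.ncard ≤ (Set.Icc m (m+5)).ncard :=
            Set.ncard_le_ncard hsub (Set.finite_Icc m (m+5))
      _ = 6 := hIcc
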